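/- arXiv:2202.12329 — 2 statements merged into one kernel-verified Lean document; each statement's English description precedes it below -/
import Mathlib

section
/- Let B_β = ((−1)^{‖β‖_1}/β!) ∑_{α≥0} (−1)^{‖α‖_1} A_α H_{α+β}((s_B − t₀)/√δ) where A_α = (1/α!) ∑_{j∈B} q_j ((s_j−s_B)/√δ)^α. Then B_β = ((−1)^{‖β‖_1}/β!) ∑_{j∈B} q_j H_β((s_j − t₀)/√δ), assuming all series converge absolutely. -/
/-!
The Hermite function `h_n` is `(-1)^n` times the `n`-th derivative of the restriction to `ℝ` of
the entire function `e^{-z²}`, so its Taylor series at any point converges on all of `ℝ`: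
`h_β(u + v) = ∑_k (-1)^k / k! h_{k+β}(u) v^k`. A power series converging everywhere converges
absolutely, so the `d` one-dimensional series multiply to
`H_β(u + v) = ∑_α (-1)^{|α|} / α! H_{α+β}(u) v^α`. Inserting the definition of `A_α` and
exchanging the finite sum over the sources `j` with the sum over `α` gives the claim, since
`u + v_j = (s_j - t₀) / √δ`.
-/

open Finset

/-- The one-dimensional Hermite function `h_n(t) = (-1)^n (d^n/dt^n) e^{-t^2}`. -/
noncomputable def hermiteFun (n : ℕ) (t : ℝ) : ℝ :=
  (-1 : ℝ) ^ n * iteratedDeriv n (fun x => Real.exp (-x ^ 2)) t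

/-- The multi-dimensional Hermite function `H_α(t) = ∏_i h_{α_i}(t_i)`. -/
noncomputable def hermiteFunMulti {d : ℕ} (α : Fin d → ℕ) (t : Fin d → ℝ) : ℝ :=
  ∏ i, hermiteFun (α i) (t i)

open Nat

theorem Differentiable.iteratedDeriv_re_comp_ofReal {F : ℂ → ℂ} (hF : Differentiable ℂ F)
    (n : ℕ) (x : ℝ) :
    iteratedDeriv n (fun y : ℝ => (F y).re) x = (iteratedDeriv n F x).re := by
  induction n generalizing x with
  | zero => simp
  | succ n ih =>
    rw [iteratedDeriv_succ, funext ih, iteratedDeriv_succ]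
    exact ((hF.contDiff (n := ⊤)).differentiable_iteratedDeriv n (by simp) x).hasDerivAt
      |>.real_of_complex.deriv

theorem Differentiable.hasSum_taylor_re_comp_ofReal {F : ℂ → ℂ} (hF : Differentiable ℂ F)
    (β : ℕ) (u v : ℝ) :
    HasSum (fun k => iteratedDeriv (k + β) (fun y : ℝ => (F y).re) u / k ! * v ^ k)
      (iteratedDeriv β (fun y : ℝ => (F y).re) (u + v)) := by
  have hG : Differentiable ℂ (iteratedDeriv β F) :=
    (hF.contDiff (n := ⊤)).differentiable_iteratedDeriv β (by simp)
  have htaylor := Complex.hasSum_re (Complex.hasSum_taylorSeries_of_entire hG u (u + v))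
  simp only [hF.iteratedDeriv_re_comp_ofReal]
  convert htaylor using 2 with k
  · rw [iteratedDeriv_eq_iterate, iteratedDeriv_eq_iterate, iteratedDeriv_eq_iterate,
      ← Function.iterate_add_apply, add_sub_cancel_left, smul_eq_mul, smul_eq_mul,
      ← Complex.ofReal_pow, ← Complex.ofReal_natCast, ← Complex.ofReal_inv, Complex.re_ofReal_mul,
      Complex.re_ofReal_mul]
    ring
  · simp

theorem exp_neg_sq_eq_re_cexp_neg_sq :
    (fun x : ℝ => Real.exp (-x ^ 2)) = fun x : ℝ => (Complex.exp (-(x : ℂ) ^ 2)).re := by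
  funext x
  rw [← Complex.ofReal_pow, ← Complex.ofReal_neg, ← Complex.ofReal_exp, Complex.ofReal_re]

theorem hasSum_hermiteFun_taylor (β : ℕ) (u v : ℝ) :
    HasSum (fun k => (-1) ^ k / k ! * hermiteFun (k + β) u * v ^ k) (hermiteFun β (u + v)) := by
  have hF : Differentiable ℂ fun z : ℂ => Complex.exp (-z ^ 2) := by fun_prop
  have htaylor := (hF.hasSum_taylor_re_comp_ofReal β u v).mul_left ((-1) ^ β)
  rw [← exp_neg_sq_eq_re_cexp_neg_sq] at htaylor
  refine htaylor.congr_fun fun k => ?_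
  -- the sign `(-1)^k` of the coefficient cancels against the one in `h_{k+β} = (-1)^(k+β) D^(k+β)`
  have hsq : ((-1 : ℝ) ^ k) ^ 2 = 1 := by rw [← pow_mul, mul_comm, pow_mul, neg_one_sq, one_pow]
  simp only [hermiteFun, pow_add]
  linear_combination (iteratedDeriv (k + β) (fun x => Real.exp (-x ^ 2)) u / k ! * v ^ k *
    (-1) ^ β) * hsq

theorem summable_norm_mul_pow_of_summable_mul_pow {𝕜 : Type*} [NormedField 𝕜] {c : ℕ → 𝕜}
    {v w : 𝕜} (hw : Summable fun k => c k * w ^ k) (hvw : ‖v‖ < ‖w‖) :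
    Summable fun k => ‖c k * v ^ k‖ := by
  have hw0 : w ≠ 0 := norm_pos_iff.mp ((norm_nonneg v).trans_lt hvw)
  have hratio : ‖v / w‖ < 1 := by
    rwa [norm_div, div_lt_one ((norm_nonneg v).trans_lt hvw)]
  have hgeom := summable_norm_mul_geometric_of_norm_lt_one' (k := 0) hratio
    (u := fun k => c k * w ^ k)
    (by simpa only [pow_zero, Nat.cast_one] using hw.tendsto_atTop_zero.isBigO_one 𝕜)
  convert hgeom using 2 with k
  rw [div_pow, mul_assoc, mul_div_cancel₀ _ (pow_ne_zero k hw0)]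

theorem summable_abs_hermiteFun_taylor (β : ℕ) (u v : ℝ) :
    Summable fun k => |(-1) ^ k / (k ! : ℝ) * hermiteFun (k + β) u * v ^ k| :=
  summable_norm_mul_pow_of_summable_mul_pow (hasSum_hermiteFun_taylor β u (|v| + 1)).summable
    (by rw [Real.norm_eq_abs, Real.norm_eq_abs, abs_of_pos (by positivity : (0 : ℝ) < |v| + 1)]
        linarith)

section PiProd

open Filter Topology

variable {ι κ : Type*} [Fintype ι] [DecidableEq ι] [DecidableEq κ]

theorem tendsto_piFinset_atTop :
    Tendsto (fun t : ι → Finset κ => Fintype.piFinset t) atTop atTop := by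
  refine tendsto_atTop_atTop_of_monotone (fun t t' h => Fintype.piFinset_subset t t' h)
    fun T => ⟨fun i => T.image (· i), fun x hx => Fintype.mem_piFinset.2 fun i =>
      Finset.mem_image_of_mem (· i) hx⟩

theorem HasSum.pi_prod {R : Type*} [CommSemiring R] [TopologicalSpace R]
    [IsTopologicalSemiring R] [T2Space R] {f : ι → κ → R} {S : ι → R}
    (hf : ∀ i, HasSum (f i) (S i)) (hsum : Summable fun x : ι → κ => ∏ i, f i (x i)) :
    HasSum (fun x : ι → κ => ∏ i, f i (x i)) (∏ i, S i) := by
  have hfactor (i : ι) : Tendsto (fun t : ι → Finset κ => ∑ k ∈ t i, f i k) atTop (𝓝 (S i)) :=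
    (hf i).comp (tendsto_atTop_atTop_of_monotone (Function.monotone_eval i)
      fun s => ⟨fun _ => s, le_rfl⟩)
  have hprod := tendsto_finsetProd univ fun i _ => hfactor i
  simp only [prod_univ_sum] at hprod
  convert hsum.hasSum
  exact tendsto_nhds_unique hprod (hsum.hasSum.comp tendsto_piFinset_atTop)

theorem summable_pi_prod_of_nonneg {f : ι → κ → ℝ} (hf0 : ∀ i k, 0 ≤ f i k)
    (hf : ∀ i, Summable (f i)) : Summable fun x : ι → κ => ∏ i, f i (x i) := by
  refine summable_of_sum_le (c := ∏ i, ∑' k, f i k) (fun x => prod_nonneg fun i _ => hf0 i _)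
    fun T => ?_
  calc ∑ x ∈ T, ∏ i, f i (x i)
      ≤ ∑ x ∈ Fintype.piFinset fun i => T.image (· i), ∏ i, f i (x i) :=
        sum_le_sum_of_subset_of_nonneg
          (fun x hx => Fintype.mem_piFinset.2 fun i => mem_image_of_mem (· i) hx)
          fun x _ _ => prod_nonneg fun i _ => hf0 i _
    _ = ∏ i, ∑ k ∈ T.image (· i), f i k := (prod_univ_sum _ _).symm
    _ ≤ ∏ i, ∑' k, f i k := prod_le_prod (fun i _ => sum_nonneg fun k _ => hf0 i k)
        fun i _ => (hf i).sum_le_tsum _ fun k _ => hf0 i k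

end PiProd

theorem hasSum_hermiteFunMulti_taylor {d : ℕ} (β : Fin d → ℕ) (u v : Fin d → ℝ) :
    HasSum (fun α : Fin d → ℕ => (-1) ^ (∑ i, α i) / (∏ i, ((α i) ! : ℝ)) *
        hermiteFunMulti (fun i => α i + β i) u * ∏ i, v i ^ α i)
      (hermiteFunMulti β (u + v)) := by
  have hterm (α : Fin d → ℕ) : (-1) ^ (∑ i, α i) / (∏ i, ((α i) ! : ℝ)) *
      hermiteFunMulti (fun i => α i + β i) u * ∏ i, v i ^ α i =
      ∏ i, (-1) ^ α i / ((α i) ! : ℝ) * hermiteFun (α i + β i) (u i) * v i ^ α i := by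
    rw [prod_mul_distrib, prod_mul_distrib, prod_div_distrib, prod_pow_eq_pow_sum, hermiteFunMulti]
  have hsum : Summable fun α : Fin d → ℕ =>
      ∏ i, (-1) ^ α i / ((α i) ! : ℝ) * hermiteFun (α i + β i) (u i) * v i ^ α i := by
    refine .of_abs ?_
    simp only [abs_prod]
    exact summable_pi_prod_of_nonneg
      (f := fun i k => |(-1) ^ k / (k ! : ℝ) * hermiteFun (k + β i) (u i) * v i ^ k|)
      (fun _ _ => abs_nonneg _)
      fun i => summable_abs_hermiteFun_taylor (β i) (u i) (v i)
  simp only [hterm]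
  simpa only [hermiteFunMulti, Pi.add_apply] using
    HasSum.pi_prod (fun i => hasSum_hermiteFun_taylor (β i) (u i) (v i)) hsum

theorem taylor_coefficients_recombine_general {d m : ℕ}
    (s : Fin m → Fin d → ℝ) (q : Fin m → ℝ) (sB t₀ : Fin d → ℝ)
    (δ : ℝ)
    (A : (Fin d → ℕ) → ℝ)
    (hA : ∀ α, A α = (1 / ∏ i, (Nat.factorial (α i) : ℝ)) *
      ∑ j, q j * ∏ i, ((s j i - sB i) / Real.sqrt δ) ^ (α i))
    (β : Fin d → ℕ) :
    ((-1 : ℝ) ^ (∑ i, β i) / ∏ i, (Nat.factorial (β i) : ℝ)) *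
        ∑' α : Fin d → ℕ,
          (-1 : ℝ) ^ (∑ i, α i) * A α *
            hermiteFunMulti (fun i => α i + β i)
              (fun i => (sB i - t₀ i) / Real.sqrt δ) =
      ((-1 : ℝ) ^ (∑ i, β i) / ∏ i, (Nat.factorial (β i) : ℝ)) *
        ∑ j, q j * hermiteFunMulti β (fun i => (s j i - t₀ i) / Real.sqrt δ) := by
  set u : Fin d → ℝ := fun i => (sB i - t₀ i) / Real.sqrt δ
  set v : Fin m → Fin d → ℝ := fun j i => (s j i - sB i) / Real.sqrt δ
  have htaylor (j : Fin m) := hasSum_hermiteFunMulti_taylor β u (v j)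
  have hsources (j : Fin m) : u + v j = fun i => (s j i - t₀ i) / Real.sqrt δ := by
    funext i
    simp only [u, v, Pi.add_apply, ← add_div, sub_add_sub_cancel']
  have hterm (α : Fin d → ℕ) : (-1) ^ (∑ i, α i) * A α * hermiteFunMulti (fun i => α i + β i) u =
      ∑ j, q j * ((-1) ^ (∑ i, α i) / (∏ i, (Nat.factorial (α i) : ℝ)) *
        hermiteFunMulti (fun i => α i + β i) u * ∏ i, v j i ^ α i) := by
    rw [hA, mul_sum, mul_sum, sum_mul]
    refine sum_congr rfl fun j _ => ?_
    ring
  congr 1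
  rw [tsum_congr hterm, (hasSum_sum fun j _ => (htaylor j).mul_left (q j)).tsum_eq]
  simp only [hsources]

/-- the Taylor coefficients at `t₀` of the Hermite expansion about
`s_B` recombine into direct Hermite evaluations at the sources. -/
theorem taylor_coefficients_recombine {d m : ℕ}
    (s : Fin m → Fin d → ℝ) (q : Fin m → ℝ) (sB t₀ : Fin d → ℝ)
    (δ : ℝ) (hδ : 0 < δ)
    (A : (Fin d → ℕ) → ℝ)
    (hA : ∀ α, A α = (1 / ∏ i, (Nat.factorial (α i) : ℝ)) *
      ∑ j, q j * ∏ i, ((s j i - sB i) / Real.sqrt δ) ^ (α i))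
    (β : Fin d → ℕ)
    (habs : Summable (fun α : Fin d → ℕ =>
      |(-1 : ℝ) ^ (∑ i, α i) * A α *
        hermiteFunMulti (fun i => α i + β i)
          (fun i => (sB i - t₀ i) / Real.sqrt δ)|)) :
    ((-1 : ℝ) ^ (∑ i, β i) / ∏ i, (Nat.factorial (β i) : ℝ)) *
        ∑' α : Fin d → ℕ,
          (-1 : ℝ) ^ (∑ i, α i) * A α *
            hermiteFunMulti (fun i => α i + β i)
              (fun i => (sB i - t₀ i) / Real.sqrt δ) =
      ((-1 : ℝ) ^ (∑ i, β i) / ∏ i, (Nat.factorial (β i) : ℝ)) *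
        ∑ j, q j * hermiteFunMulti β (fun i => (s j i - t₀ i) / Real.sqrt δ) :=
  taylor_coefficients_recombine_general s q sB t₀ δ A hA β
end

section
/- Let 0 < r ≤ 1/2, p ≥ 1 an integer, K > 0, Q ≥ 0, and suppose coefficients B_β (β ∈ ℕ^d) satisfy |B_β| ≤ K·Q·2^{‖β‖_1/2}/√(β!). Then for any u ∈ ℝ^d with ‖u‖_∞ ≤ r/√2, the tail over multi-indices β with some coordinate ≥ p satisfies |∑_{β≥p} B_β u^β| ≤ (K·Q/(1−r)^d) ∑_{k=0}^{d−1} C(d,k)(1−r^p)^k (r^p/√(p!))^{d−k}. -/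
/-!
With `g n = r ^ n / √(n!)`, the hypotheses give `|B β u ^ β| ≤ K Q ∏ i, g (β i)`, and the
product series `∑_β ∏ i, g (β i)` sums to `S ^ d` with `S = ∑ n, g n`. Removing the box
`{β | ∀ i, β i < p}`, whose sum is `H ^ d` with `H = ∑_{n < p} g n`, leaves the tail
`S ^ d - H ^ d = (H + T) ^ d - H ^ d` with `T = ∑_{n ≥ p} g n`, which the binomial formula
bounds using the geometric estimates `H ≤ (1 - r ^ p) / (1 - r)` and
`T ≤ r ^ p / (√(p!) (1 - r))`.
-/

open Finset
open scoped Nat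

theorem HasSum.prod_pi_fin {ι : Type*} {g : ι → ℝ} {a : ℝ} (hg : HasSum g a) (hg0 : 0 ≤ g)
    (d : ℕ) : HasSum (fun β : Fin d → ι => ∏ i, g (β i)) (a ^ d) := by
  induction d with
  | zero => simp
  | succ d ih =>
    have hsummable :=
      hg.summable.mul_of_nonneg ih.summable hg0 fun β => prod_nonneg fun i _ => hg0 (β i)
    have hprod := hg.mul ih hsummable
    rw [← (Fin.consEquiv fun _ => ι).hasSum_iff, pow_succ']
    simpa [Function.comp_def, Fin.consEquiv, Fin.prod_univ_succ] using hprod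

theorem HasSum.prod_pi_fin_subtype_exists_le {g : ℕ → ℝ} {a : ℝ} (hg : HasSum g a)
    (hg0 : 0 ≤ g) (d p : ℕ) :
    HasSum (fun β : {β : Fin d → ℕ // ∃ i, p ≤ β i} => ∏ i, g (β.1 i))
      (a ^ d - (∑ n ∈ range p, g n) ^ d) := by
  have hbox : ∀ β : Fin d → ℕ, β ∉ Fintype.piFinset (fun _ => range p) ↔ ∃ i, p ≤ β i := by
    simp [Fintype.mem_piFinset]
  have hbox_sum : (∑ n ∈ range p, g n) ^ d =
      ∑ β ∈ Fintype.piFinset (fun _ : Fin d => range p), ∏ i, g (β i) := by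
    rw [← prod_univ_sum, Fin.prod_const]
  rw [← (Equiv.subtypeEquivRight hbox).hasSum_iff, hbox_sum]
  exact (Finset.hasSum_iff_compl _).1 (hg.prod_pi_fin hg0 d)

theorem add_pow_sub_pow_le {x y a b : ℝ} (hx : 0 ≤ x) (hxa : x ≤ a) (hy : 0 ≤ y) (hyb : y ≤ b)
    (d : ℕ) : (x + y) ^ d - x ^ d ≤ ∑ k ∈ range d, (d.choose k : ℝ) * a ^ k * b ^ (d - k) := by
  rw [add_pow, sum_range_succ, Nat.choose_self, Nat.sub_self, pow_zero, mul_one, Nat.cast_one,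
    mul_one, add_sub_cancel_right]
  refine sum_le_sum fun k _ => ?_
  rw [mul_comm, mul_assoc]
  gcongr
  exact pow_nonneg (hx.trans hxa) k

theorem pow_div_sqrt_factorial_le_pow {r : ℝ} (hr : 0 ≤ r) (n : ℕ) :
    r ^ n / √(n ! : ℝ) ≤ r ^ n :=
  div_le_self (pow_nonneg hr n) (Real.one_le_sqrt.2 (mod_cast n.factorial_pos))

theorem summable_pow_div_sqrt_factorial {r : ℝ} (hr0 : 0 ≤ r) (hr1 : r < 1) :
    Summable fun n : ℕ => r ^ n / √(n ! : ℝ) :=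
  (summable_geometric_of_lt_one hr0 hr1).of_nonneg_of_le (fun n => by positivity)
    (pow_div_sqrt_factorial_le_pow hr0)

theorem sum_range_pow_div_sqrt_factorial_le {r : ℝ} (hr0 : 0 ≤ r) (hr1 : r < 1) (p : ℕ) :
    ∑ n ∈ range p, r ^ n / √(n ! : ℝ) ≤ (1 - r ^ p) / (1 - r) :=
  calc ∑ n ∈ range p, r ^ n / √(n ! : ℝ) ≤ ∑ n ∈ range p, r ^ n :=
        sum_le_sum fun n _ => pow_div_sqrt_factorial_le_pow hr0 n
    _ = (1 - r ^ p) / (1 - r) := by rw [geom_sum_eq hr1.ne, ← neg_div_neg_eq, neg_sub, neg_sub]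

theorem tsum_pow_div_sqrt_factorial_nat_add_le {r : ℝ} (hr0 : 0 ≤ r) (hr1 : r < 1) (p : ℕ) :
    ∑' n, r ^ (n + p) / √((n + p)! : ℝ) ≤ r ^ p / √(p ! : ℝ) / (1 - r) := by
  have hterm : ∀ n, r ^ (n + p) / √((n + p)! : ℝ) ≤ r ^ p / √(p ! : ℝ) * r ^ n := fun n =>
    calc r ^ (n + p) / √((n + p)! : ℝ) ≤ r ^ (n + p) / √(p ! : ℝ) := by
          gcongr
          exact Nat.le_add_left p n
      _ = r ^ p / √(p ! : ℝ) * r ^ n := by ring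
  calc ∑' n, r ^ (n + p) / √((n + p)! : ℝ)
      ≤ ∑' n, r ^ p / √(p ! : ℝ) * r ^ n :=
        ((summable_nat_add_iff p).2 (summable_pow_div_sqrt_factorial hr0 hr1)).tsum_le_tsum hterm
          ((summable_geometric_of_lt_one hr0 hr1).mul_left _)
    _ = r ^ p / √(p ! : ℝ) / (1 - r) := by
        rw [tsum_mul_left, tsum_geometric_of_lt_one hr0 hr1, ← div_eq_mul_inv]

theorem two_rpow_sum_div_two {ι : Type*} [Fintype ι] (β : ι → ℕ) :
    (2 : ℝ) ^ ((∑ i, (β i : ℝ)) / 2) = ∏ i, √2 ^ β i := by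
  rw [Real.rpow_div_two_eq_sqrt _ zero_le_two, ← Nat.cast_sum, Real.rpow_natCast,
    prod_pow_eq_pow_sum]

theorem abs_mul_prod_pow_le {ι : Type*} [Fintype ι] {b c r : ℝ} {β : ι → ℕ} {u : ι → ℝ}
    (hb : |b| ≤ c * (2 : ℝ) ^ ((∑ i, (β i : ℝ)) / 2) / √(∏ i, ((β i)! : ℝ)))
    (hu : ∀ i, |u i| ≤ r / √2) :
    |b * ∏ i, u i ^ β i| ≤ c * ∏ i, r ^ β i / √((β i)! : ℝ) :=
  calc |b * ∏ i, u i ^ β i| = |b| * ∏ i, |u i| ^ β i := by simp only [abs_mul, abs_prod, abs_pow]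
    _ ≤ c * (2 : ℝ) ^ ((∑ i, (β i : ℝ)) / 2) / √(∏ i, ((β i)! : ℝ)) * ∏ i, (r / √2) ^ β i :=
        mul_le_mul hb (prod_le_prod (fun i _ => by positivity)
          fun i _ => pow_le_pow_left₀ (abs_nonneg _) (hu i) _) (by positivity)
          ((abs_nonneg b).trans hb)
    _ = c * ∏ i, r ^ β i / √((β i)! : ℝ) := by
        rw [two_rpow_sum_div_two, Real.sqrt_prod _ fun i _ => by positivity, mul_div_assoc,
          mul_assoc, ← prod_div_distrib, ← prod_mul_distrib]
        congr 1
        refine prod_congr rfl fun i _ => ?_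
        rw [div_pow]
        field_simp

theorem truncated_taylor_tail_bound_general {d : ℕ}
    (r : ℝ) (hr0 : 0 < r) (hr : r ≤ 1 / 2) (p : ℕ)
    (K Q : ℝ) (hK : 0 < K) (hQ : 0 ≤ Q)
    (B : (Fin d → ℕ) → ℝ)
    (hB : ∀ β : Fin d → ℕ,
      |B β| ≤ K * Q * (2 : ℝ) ^ ((∑ i, (β i : ℝ)) / 2) /
        Real.sqrt (∏ i, (Nat.factorial (β i) : ℝ)))
    (u : Fin d → ℝ) (hu : ∀ i, |u i| ≤ r / Real.sqrt 2) :
    |∑' β : {β : Fin d → ℕ // ∃ i, p ≤ β i}, B β.1 * ∏ i, u i ^ (β.1 i)| ≤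
      (K * Q / (1 - r) ^ d) *
        ∑ k ∈ range d, (Nat.choose d k : ℝ) * (1 - r ^ p) ^ k *
          (r ^ p / Real.sqrt (Nat.factorial p : ℝ)) ^ (d - k) := by
  have hr1 : r < 1 := by linarith
  set g : ℕ → ℝ := fun n => r ^ n / √(n ! : ℝ)
  have hg0 : 0 ≤ g := fun n => by positivity
  have hg : Summable g := summable_pow_div_sqrt_factorial hr0.le hr1
  have htail := hg.hasSum.prod_pi_fin_subtype_exists_le hg0 d p
  calc |∑' β : {β : Fin d → ℕ // ∃ i, p ≤ β i}, B β.1 * ∏ i, u i ^ (β.1 i)|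
      ≤ K * Q * ((∑' n, g n) ^ d - (∑ n ∈ range p, g n) ^ d) :=
        tsum_of_norm_bounded (htail.mul_left (K * Q)) fun β =>
          (Real.norm_eq_abs _).trans_le (abs_mul_prod_pow_le (hB β.1) hu)
    _ ≤ K * Q * ∑ k ∈ range d, (d.choose k : ℝ) * ((1 - r ^ p) / (1 - r)) ^ k *
          (r ^ p / √(p ! : ℝ) / (1 - r)) ^ (d - k) := by
        rw [← hg.sum_add_tsum_nat_add p]
        have hKQ : 0 ≤ K * Q := mul_nonneg hK.le hQ
        gcongr
        exact add_pow_sub_pow_le (sum_nonneg fun n _ => hg0 n)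
          (sum_range_pow_div_sqrt_factorial_le hr0.le hr1 p) (tsum_nonneg fun n => hg0 _)
          (tsum_pow_div_sqrt_factorial_nat_add_le hr0.le hr1 p) d
    _ = _ := by
        rw [mul_sum, mul_sum]
        refine sum_congr rfl fun k hk => ?_
        have hsplit : (1 - r) ^ d = (1 - r) ^ k * (1 - r) ^ (d - k) := by
          rw [← pow_add, Nat.add_sub_cancel' (mem_range.1 hk).le]
        rw [div_pow, div_pow, hsplit]
        field_simp

/-- truncated Taylor expansion tail bound. If the Taylor coefficients
satisfy `|B_β| ≤ K·Q·2^{‖β‖₁/2}/√(β!)` and `‖u‖_∞ ≤ r/√2`, then the tail of the Taylor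
series over multi-indices `β` having some coordinate `≥ p` is bounded as stated. -/
theorem truncated_taylor_tail_bound {d : ℕ}
    (r : ℝ) (hr0 : 0 < r) (hr : r ≤ 1 / 2) (p : ℕ) (hp : 1 ≤ p)
    (K Q : ℝ) (hK : 0 < K) (hQ : 0 ≤ Q)
    (B : (Fin d → ℕ) → ℝ)
    (hB : ∀ β : Fin d → ℕ,
      |B β| ≤ K * Q * (2 : ℝ) ^ ((∑ i, (β i : ℝ)) / 2) /
        Real.sqrt (∏ i, (Nat.factorial (β i) : ℝ)))
    (u : Fin d → ℝ) (hu : ∀ i, |u i| ≤ r / Real.sqrt 2) :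
    |∑' β : {β : Fin d → ℕ // ∃ i, p ≤ β i}, B β.1 * ∏ i, u i ^ (β.1 i)| ≤
      (K * Q / (1 - r) ^ d) *
        ∑ k ∈ range d, (Nat.choose d k : ℝ) * (1 - r ^ p) ^ k *
          (r ^ p / Real.sqrt (Nat.factorial p : ℝ)) ^ (d - k) :=
  truncated_taylor_tail_bound_general r hr0 hr p K Q hK hQ B hB u hu
end
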